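/- The fractional domatic number of a finite simple graph G is strictly greater than 2 if and only if the minimum degree of G is at least 2 and no connected component of G is isomorphic to the 4-cycle C₄. -/

import Mathlib

/-!
If a vertex `v` has at most one neighbour `w`, every dominating set meets `{v, w}`; if a component
is a 4-cycle, every dominating set contains two of its vertices. Double counting then gives
`k ≤ 2s` for every `(k,s)`-configuration.

Conversely, assume minimum degree at least 2 and no `C₄` component. It suffices to find, for each
vertex `u`, a gadget: four dominating sets covering every vertex at most twice and `u` at most
once, because the gadgets of all `n` vertices together form a `(4n, 2n-1)`-configuration. If some
maximal independent set `I` misses `u` and one of its neighbours, take `I` and `V \ (I ∪ {u})`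
twice each. Otherwise every maximal independent set avoiding `u` contains all neighbours of `u`;
fix one such `I` and two neighbours `x₁, x₂` of `u`. If every vertex outside `I ∪ {u}` has a
neighbour in `I \ {x₁, x₂}`, the sets `I`, `I \ {x₁, x₂} ∪ {u}` and `B ∪ {xᵢ}`, where
`B = V \ (I ∪ {u})`, form a gadget. Otherwise an exchange argument shows that a vertex `q` violating
this is adjacent to `x₁` and `x₂`, and that `u` has no further neighbours. The square `u x₁ q x₂`
is not a whole component, and an extra edge at `x₁`, `x₂` or `q` tells how to complete its vertices
by two maximal independent sets of the rest of the graph.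
-/

open SimpleGraph

/-- A set of vertices `D` is dominating in `G` if every vertex not in `D`
has a neighbour in `D`. -/
def Dominating {V : Type*} (G : SimpleGraph V) (D : Finset V) : Prop :=
  ∀ v : V, v ∉ D → ∃ u ∈ D, G.Adj v u

/-- A `(k,s)`-configuration of `G`: a multiset of `k` dominating sets of `G`
such that every vertex belongs to at most `s` of them. -/
def IsConfig {V : Type*} [DecidableEq V] (G : SimpleGraph V)
    (𝒟 : Multiset (Finset V)) (k s : ℕ) : Prop :=
  Multiset.card 𝒟 = k ∧ (∀ D ∈ 𝒟, Dominating G D) ∧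
    ∀ v : V, 𝒟.countP (fun D => v ∈ D) ≤ s

/-- The fractional domatic number of `G`: the supremum (attained as a maximum) of `k/s`
over all natural numbers `k`, `s ≥ 1` such that `G` admits a `(k,s)`-configuration. -/
noncomputable def fracDomatic {V : Type*} [DecidableEq V] (G : SimpleGraph V) : ℝ :=
  sSup {x : ℝ | ∃ k s : ℕ, 0 < s ∧ (∃ 𝒟 : Multiset (Finset V), IsConfig G 𝒟 k s) ∧
    x = (k : ℝ) / (s : ℝ)}

open Finset

section

variable {V : Type*} {G : SimpleGraph V}

theorem Dominating.nonempty [Nonempty V] {D : Finset V} (hD : Dominating G D) : D.Nonempty := by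
  obtain ⟨v⟩ := ‹Nonempty V›
  by_cases hv : v ∈ D
  · exact ⟨v, hv⟩
  · obtain ⟨w, hw, -⟩ := hD v hv
    exact ⟨w, hw⟩

theorem two_le_card_of_dominating_cycleGraph_four {D : Finset (Fin 4)}
    (hD : Dominating (cycleGraph 4) D) : 2 ≤ #D := by
  revert D
  unfold Dominating
  decide

variable [DecidableEq V]

theorem Multiset.mul_card_le_sum_countP {ι : Type*} [Fintype ι] (f : ι → V) {c : ℕ}
    (𝒟 : Multiset (Finset V)) (hc : ∀ D ∈ 𝒟, c ≤ #{i | f i ∈ D}) :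
    c * Multiset.card 𝒟 ≤ ∑ i, 𝒟.countP (f i ∈ ·) := by
  induction 𝒟 using Multiset.induction with
  | empty => simp
  | cons D 𝒟 ih =>
    have h𝒟 := ih fun D' hD' => hc D' (Multiset.mem_cons_of_mem hD')
    have hD := hc D (Multiset.mem_cons_self D 𝒟)
    simp only [Multiset.card_cons, Multiset.countP_cons, Finset.sum_add_distrib,
      Finset.sum_boole, Nat.cast_id]
    linarith

theorem IsConfig.mul_le {ι : Type*} [Fintype ι] {𝒟 : Multiset (Finset V)} {k s c : ℕ}
    (h𝒟 : IsConfig G 𝒟 k s) (f : ι → V) (hc : ∀ D, Dominating G D → c ≤ #{i | f i ∈ D}) :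
    c * k ≤ Fintype.card ι * s := by
  obtain ⟨rfl, hdom, hload⟩ := h𝒟
  calc c * Multiset.card 𝒟 ≤ ∑ i, 𝒟.countP (f i ∈ ·) :=
        𝒟.mul_card_le_sum_countP f fun D hD => hc D (hdom D hD)
    _ ≤ ∑ _i : ι, s := Finset.sum_le_sum fun i _ => hload (f i)
    _ = Fintype.card ι * s := by simp

theorem IsConfig.le_card_mul [Fintype V] [Nonempty V] {𝒟 : Multiset (Finset V)} {k s : ℕ}
    (h𝒟 : IsConfig G 𝒟 k s) : k ≤ Fintype.card V * s := by
  simpa using h𝒟.mul_le id (c := 1) fun D hD => by simpa [Finset.one_le_card] using hD.nonempty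

theorem IsConfig.le_two_mul_of_neighborSet_subset {𝒟 : Multiset (Finset V)} {k s : ℕ}
    (h𝒟 : IsConfig G 𝒟 k s) {v w : V} (hvw : G.neighborSet v ⊆ {w}) : k ≤ 2 * s := by
  simpa using h𝒟.mul_le ![v, w] (c := 1) fun D hD => by
    rw [Finset.one_le_card]
    by_cases hv : v ∈ D
    · exact ⟨0, by simpa using hv⟩
    · obtain ⟨u, hu, hvu⟩ := hD v hv
      obtain rfl : u = w := hvw hvu
      exact ⟨1, by simpa using hu⟩

theorem IsConfig.le_two_mul_of_ncard_neighborSet_le_one [Fintype V]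
    {𝒟 : Multiset (Finset V)} {k s : ℕ} (h𝒟 : IsConfig G 𝒟 k s) {v : V}
    (hv : (G.neighborSet v).ncard ≤ 1) : k ≤ 2 * s := by
  rcases (Set.ncard_le_one_iff_subsingleton.1 hv).eq_empty_or_singleton with h | ⟨w, h⟩
  · exact h𝒟.le_two_mul_of_neighborSet_subset (w := v) (h ▸ Set.empty_subset _)
  · exact h𝒟.le_two_mul_of_neighborSet_subset h.le

theorem Dominating.comap_iso_induce_supp {W : Type*} [Fintype W] [DecidableEq W]
    {H : SimpleGraph W} {c : G.ConnectedComponent} (e : G.induce c.supp ≃g H) {D : Finset V}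
    (hD : Dominating G D) :
    Dominating H {w | (e.symm w : V) ∈ D} := by
  intro w hw
  simp only [Finset.mem_filter, Finset.mem_univ, true_and] at hw
  obtain ⟨u, hu, hwu⟩ := hD _ hw
  have hu' : u ∈ c.supp := c.mem_supp_of_adj_mem_supp (e.symm w).2 hwu
  refine ⟨e ⟨u, hu'⟩, by simpa using hu, ?_⟩
  rw [← e.symm.map_rel_iff]
  simpa using hwu

theorem IsConfig.le_two_mul_of_iso_cycleGraph_four {𝒟 : Multiset (Finset V)} {k s : ℕ}
    (h𝒟 : IsConfig G 𝒟 k s) {c : G.ConnectedComponent} (e : G.induce c.supp ≃g cycleGraph 4) :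
    k ≤ 2 * s := by
  have := h𝒟.mul_le (fun i => (e.symm i : V)) (c := 2) fun D hD =>
    two_le_card_of_dominating_cycleGraph_four (hD.comap_iso_induce_supp e)
  simp only [Fintype.card_fin] at this
  omega

theorem fracDomatic_le_two (hG : ∀ 𝒟 k s, IsConfig G 𝒟 k s → k ≤ 2 * s) :
    fracDomatic G ≤ 2 := by
  refine csSup_le ⟨0, 0, 1, one_pos, ⟨0, by simp [IsConfig]⟩, by simp⟩ ?_
  rintro x ⟨k, s, hs, ⟨𝒟, h𝒟⟩, rfl⟩
  rw [div_le_iff₀ (by exact_mod_cast hs)]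
  exact_mod_cast hG 𝒟 k s h𝒟

theorem div_le_fracDomatic [Fintype V] [Nonempty V] {𝒟 : Multiset (Finset V)} {k s : ℕ}
    (h𝒟 : IsConfig G 𝒟 k s) (hs : 0 < s) : (k / s : ℝ) ≤ fracDomatic G := by
  refine le_csSup ⟨Fintype.card V, ?_⟩ ⟨k, s, hs, ⟨𝒟, h𝒟⟩, rfl⟩
  rintro x ⟨k', s', hs', ⟨𝒟', h𝒟'⟩, rfl⟩
  rw [div_le_iff₀ (by exact_mod_cast hs')]
  exact_mod_cast h𝒟'.le_card_mul

def IsGadgetAt (G : SimpleGraph V) (M : Multiset (Finset V)) (u : V) : Prop :=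
  IsConfig G M 4 2 ∧ M.countP (u ∈ ·) ≤ 1

theorem isConfig_sum_of_isGadgetAt [Fintype V] {M : V → Multiset (Finset V)}
    (hM : ∀ u, IsGadgetAt G (M u) u) :
    IsConfig G (∑ u, M u) (4 * Fintype.card V) (2 * Fintype.card V - 1) := by
  refine ⟨?_, fun D hD => ?_, fun v => ?_⟩
  · simp [Multiset.card_sum, (hM _).1.1, mul_comm]
  · obtain ⟨u, -, hu⟩ := Multiset.mem_sum.1 hD
    exact (hM u).1.2.1 D hu
  · have hsum := map_sum (Multiset.countPAddMonoidHom (v ∈ ·)) M univ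
    simp only [Multiset.coe_countPAddMonoidHom] at hsum
    rw [hsum, ← Finset.add_sum_erase _ _ (mem_univ v)]
    have hrest : ∑ u ∈ univ.erase v, (M u).countP (v ∈ ·) ≤ ∑ _u ∈ univ.erase v, 2 :=
      sum_le_sum fun u _ => (hM u).1.2.2 v
    have hcard : #(univ.erase v) + 1 = Fintype.card V := card_erase_add_one (mem_univ v)
    simp only [sum_const, smul_eq_mul] at hrest
    have := (hM v).2
    omega

theorem two_lt_fracDomatic [Fintype V] [Nonempty V] (hG : ∀ u, ∃ M, IsGadgetAt G M u) :
    2 < fracDomatic G := by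
  choose M hM using hG
  have hn : (1 : ℝ) ≤ Fintype.card V := by exact_mod_cast Fintype.card_pos
  have hs : 0 < 2 * Fintype.card V - 1 := by have := Fintype.card_pos (α := V); omega
  refine lt_of_lt_of_le ?_ (div_le_fracDomatic (isConfig_sum_of_isGadgetAt hM) hs)
  rw [Nat.cast_sub (by omega), lt_div_iff₀ (by push_cast; linarith)]
  push_cast
  linarith

end

section

variable {V : Type*} {G : SimpleGraph V}

theorem SimpleGraph.IsIndepSet.not_adj {s : Set V} (hs : G.IsIndepSet s) {a b : V} (ha : a ∈ s)
    (hb : b ∈ s) : ¬G.Adj a b :=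
  fun h => hs ha hb h.ne h

theorem exists_adj_ne (hδ : ∀ v, 2 ≤ (G.neighborSet v).ncard) (v x : V) :
    ∃ w, G.Adj v w ∧ w ≠ x :=
  Set.exists_ne_of_one_lt_ncard (one_lt_two.trans_le (hδ v)) x

theorem exists_adj_ne_notMem (hδ : ∀ v, 2 ≤ (G.neighborSet v).ncard) {I : Finset V}
    (hI : G.IsIndepSet (I : Set V)) {v : V} (hv : v ∈ I) (x : V) :
    ∃ w, G.Adj v w ∧ w ≠ x ∧ w ∉ I := by
  obtain ⟨w, hvw, hwx⟩ := exists_adj_ne hδ v x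
  exact ⟨w, hvw, hwx, fun hw => hI.not_adj (by simpa using hv) (by simpa using hw) hvw⟩

theorem SimpleGraph.nonempty_iso_induce_supp_of_embedding {W : Type*} {H : SimpleGraph W}
    (hH : H.Connected) (f : H ↪g G) (hf : ∀ a v, G.Adj (f a) v → v ∈ Set.range f) (a : W) :
    Nonempty (G.induce (G.connectedComponentMk (f a)).supp ≃g H) := by
  have hsupp : (G.connectedComponentMk (f a)).supp = Set.range f := by
    ext v
    refine ⟨fun hv => ?_, ?_⟩
    · obtain ⟨p⟩ := (ConnectedComponent.exact hv).symm
      suffices ∀ x y, G.Walk x y → x ∈ Set.range f → y ∈ Set.range f from this _ _ p ⟨a, rfl⟩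
      intro x y p
      induction p with
      | nil => exact id
      | cons h _ ih => rintro ⟨b, rfl⟩; exact ih (hf b _ h)
    · rintro ⟨b, rfl⟩
      exact ConnectedComponent.sound ((hH.preconnected b a).map f.toHom)
  rw [hsupp]
  exact ⟨(Embedding.isoInduceRange f).symm⟩

theorem nonempty_iso_cycleGraph_four {u x₁ q x₂ : V} (hux₁ : G.Adj u x₁) (hux₂ : G.Adj u x₂)
    (hqx₁ : G.Adj q x₁) (hqx₂ : G.Adj q x₂) (huq : u ≠ q) (hnuq : ¬G.Adj u q) (hx : x₁ ≠ x₂)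
    (hx₁₂ : ¬G.Adj x₁ x₂) (hNu : ∀ w, G.Adj u w → w = x₁ ∨ w = x₂)
    (hNq : ∀ w, G.Adj q w → w = x₁ ∨ w = x₂) (hNx₁ : ∀ w, G.Adj x₁ w → w = u ∨ w = q)
    (hNx₂ : ∀ w, G.Adj x₂ w → w = u ∨ w = q) :
    Nonempty (G.induce (G.connectedComponentMk u).supp ≃g cycleGraph 4) := by
  let f : Fin 4 → V := ![u, x₁, q, x₂]
  have := hux₁.ne; have := hux₂.ne; have := hqx₁.ne; have := hqx₂.ne
  have hf : Function.Injective f := by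
    intro i j
    fin_cases i <;> fin_cases j <;> simp [f, *, Ne.symm]
  have hadj : ∀ i j, G.Adj (f i) (f j) ↔ (cycleGraph 4).Adj i j := by
    intro i j
    have hnqu : ¬G.Adj q u := fun h => hnuq h.symm
    have hx₂₁ : ¬G.Adj x₂ x₁ := fun h => hx₁₂ h.symm
    fin_cases i <;> fin_cases j <;> simp [f, hux₁, hux₂, hqx₁, hqx₂, hux₁.symm, hux₂.symm,
      hqx₁.symm, hqx₂.symm, hnuq, hnqu, hx₁₂, hx₂₁] <;> decide
  have hclosed : ∀ a v, G.Adj (f a) v → v ∈ Set.range f := by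
    intro a v hv
    fin_cases a
    · rcases hNu v hv with rfl | rfl
      exacts [⟨1, rfl⟩, ⟨3, rfl⟩]
    · rcases hNx₁ v hv with rfl | rfl
      exacts [⟨0, rfl⟩, ⟨2, rfl⟩]
    · rcases hNq v hv with rfl | rfl
      exacts [⟨1, rfl⟩, ⟨3, rfl⟩]
    · rcases hNx₂ v hv with rfl | rfl
      exacts [⟨0, rfl⟩, ⟨2, rfl⟩]
  exact nonempty_iso_induce_supp_of_embedding cycleGraph_connected
    ⟨⟨f, hf⟩, hadj _ _⟩ hclosed 0

variable [DecidableEq V]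

theorem exists_isIndepSet_dominates (R I₀ : Finset V) (hI₀R : I₀ ⊆ R)
    (hI₀ : G.IsIndepSet (I₀ : Set V)) :
    ∃ I : Finset V, I₀ ⊆ I ∧ I ⊆ R ∧ G.IsIndepSet (I : Set V) ∧
      ∀ v ∈ R, v ∉ I → ∃ w ∈ I, G.Adj v w := by
  classical
  obtain ⟨I, hI, hmax⟩ := exists_max_image
    {J ∈ R.powerset | I₀ ⊆ J ∧ G.IsIndepSet (J : Set V)} card ⟨I₀, by simp [hI₀R, hI₀]⟩
  simp only [mem_filter, mem_powerset] at hI hmax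
  obtain ⟨hIR, hI₀I, hIind⟩ := hI
  refine ⟨I, hI₀I, hIR, hIind, fun v hvR hvI => ?_⟩
  by_contra! hv
  have hins : G.IsIndepSet (insert v I : Finset V) := by
    rw [coe_insert, SimpleGraph.IsIndepSet, Set.pairwise_insert]
    exact ⟨hIind, fun w hw _ => ⟨hv w hw, fun h => hv w hw h.symm⟩⟩
  have := hmax _ ⟨insert_subset hvR hIR, hI₀I.trans (subset_insert v I), hins⟩
  rw [card_insert_of_notMem hvI] at this
  omega

theorem dominating_union_of_dominates_compl {S K X : Finset V}
    (hX : ∀ v ∉ S, v ∉ X → ∃ w ∈ X, G.Adj v w)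
    (hS : ∀ v ∈ S, v ∉ K → ∃ w ∈ K ∪ X, G.Adj v w) : Dominating G (K ∪ X) := by
  intro v hv
  rw [mem_union, not_or] at hv
  by_cases hvS : v ∈ S
  · exact hS v hvS hv.1
  · obtain ⟨w, hw, hvw⟩ := hX v hvS hv.2
    exact ⟨w, mem_union_right K hw, hvw⟩

variable [Fintype V]

theorem exists_isIndepSet_dominating (I₀ : Finset V) (hI₀ : G.IsIndepSet (I₀ : Set V)) :
    ∃ I : Finset V, I₀ ⊆ I ∧ G.IsIndepSet (I : Set V) ∧ Dominating G I := by
  obtain ⟨I, hI₀I, -, hI, hdom⟩ := exists_isIndepSet_dominates univ I₀ (subset_univ _) hI₀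
  exact ⟨I, hI₀I, hI, fun v hv => hdom v (mem_univ v) hv⟩

theorem dominating_union_compl_sdiff {S K I : Finset V} (hI : G.IsIndepSet (I : Set V))
    (hI_adj : ∀ v ∈ I, v ∉ S → ∃ w, G.Adj v w ∧ (w ∈ K ∨ w ∉ S))
    (hS : ∀ v ∈ S, v ∉ K → ∃ w ∈ K ∪ (Sᶜ \ I), G.Adj v w) : Dominating G (K ∪ (Sᶜ \ I)) := by
  intro v hv
  by_cases hvS : v ∈ S
  · exact hS v hvS fun h => hv (mem_union_left _ h)
  · have hvI : v ∈ I := by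
      by_contra hvI
      exact hv (mem_union_right _ (mem_sdiff.2 ⟨mem_compl.2 hvS, hvI⟩))
    obtain ⟨w, hvw, hw | hw⟩ := hI_adj v hvI hvS
    · exact ⟨w, mem_union_left _ hw, hvw⟩
    · refine ⟨w, mem_union_right _ (mem_sdiff.2 ⟨mem_compl.2 hw, fun hwI => ?_⟩), hvw⟩
      exact hI.not_adj (by simpa using hvI) (by simpa using hwI) hvw

/-- Every vertex outside `S` lies in exactly two of the four sets. -/
theorem isGadgetAt_of_split {S X Y K₁ K₂ K₃ K₄ : Finset V} {u : V} (hu : u ∈ S)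
    (hX : X ⊆ Sᶜ) (hY : Y ⊆ Sᶜ) (hK : K₁ ∪ K₂ ∪ K₃ ∪ K₄ ⊆ S)
    (h₁ : Dominating G (K₁ ∪ X)) (h₂ : Dominating G (K₂ ∪ (Sᶜ \ X)))
    (h₃ : Dominating G (K₃ ∪ Y)) (h₄ : Dominating G (K₄ ∪ (Sᶜ \ Y)))
    (hload : ∀ w ∈ S, ({K₁, K₂, K₃, K₄} : Multiset (Finset V)).countP (w ∈ ·) ≤ 2)
    (hloadu : ({K₁, K₂, K₃, K₄} : Multiset (Finset V)).countP (u ∈ ·) ≤ 1) :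
    IsGadgetAt G {K₁ ∪ X, K₂ ∪ (Sᶜ \ X), K₃ ∪ Y, K₄ ∪ (Sᶜ \ Y)} u := by
  have hS : ∀ w ∈ S, ({K₁ ∪ X, K₂ ∪ (Sᶜ \ X), K₃ ∪ Y, K₄ ∪ (Sᶜ \ Y)} :
      Multiset (Finset V)).countP (w ∈ ·) =
      ({K₁, K₂, K₃, K₄} : Multiset (Finset V)).countP (w ∈ ·) := by
    intro w hw
    have hwX : w ∉ X := fun h => mem_compl.1 (hX h) hw
    have hwY : w ∉ Y := fun h => mem_compl.1 (hY h) hw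
    simp [← Multiset.cons_zero, Multiset.countP_cons, hw, hwX, hwY]
  refine ⟨⟨rfl, ?_, fun w => ?_⟩, hS u hu ▸ hloadu⟩
  · simp only [Multiset.insert_eq_cons, Multiset.mem_cons, Multiset.mem_singleton]
    rintro D (rfl | rfl | rfl | rfl) <;> assumption
  · by_cases hw : w ∈ S
    · exact hS w hw ▸ hload w hw
    · have hwK : ∀ K, K ⊆ S → w ∉ K := fun K hKS h => hw (hKS h)
      simp only [union_subset_iff] at hK
      simp only [Multiset.insert_eq_cons, ← Multiset.cons_zero, Multiset.countP_cons,
        Multiset.countP_zero, mem_union, mem_sdiff, mem_compl, hwK _ hK.1.1.1, hwK _ hK.1.1.2,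
        hwK _ hK.1.2, hwK _ hK.2, hw, false_or, not_false_eq_true, true_and]
      split_ifs <;> simp_all

theorem exists_isGadgetAt_of_adj_notMem (hδ : ∀ v, 2 ≤ (G.neighborSet v).ncard)
    {I : Finset V} (hI : G.IsIndepSet (I : Set V)) (hID : Dominating G I) {u w : V}
    (huI : u ∉ I) (huw : G.Adj u w) (hwI : w ∉ I) : ∃ M, IsGadgetAt G M u := by
  have hIu : I ⊆ {u}ᶜ := fun v hv => by simpa using ne_of_mem_of_not_mem hv huI
  have hB : Dominating G (∅ ∪ ({u}ᶜ \ I)) := by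
    refine dominating_union_compl_sdiff hI (fun v hv _ => ?_) fun v hv _ => ?_
    · obtain ⟨w', hvw', hw'u, -⟩ := exists_adj_ne_notMem hδ hI hv u
      exact ⟨w', hvw', Or.inr (by simpa using hw'u)⟩
    · obtain rfl := mem_singleton.1 hv
      exact ⟨w, by simp [hwI, huw.ne'], huw⟩
  exact ⟨_, isGadgetAt_of_split (K₁ := ∅) (K₂ := ∅) (K₃ := ∅) (K₄ := ∅) (mem_singleton_self u)
    hIu hIu (by simp) (by simpa) hB (by simpa) hB (by simp [← Multiset.cons_zero])
    (by simp [← Multiset.cons_zero])⟩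

theorem exists_isGadgetAt_of_forall_adj_ne (hδ : ∀ v, 2 ≤ (G.neighborSet v).ncard)
    {I : Finset V} (hI : G.IsIndepSet (I : Set V)) {u x₁ x₂ : V} (hx₁ : x₁ ∈ I) (hx₂ : x₂ ∈ I)
    (hx : x₁ ≠ x₂) (hux₁ : G.Adj u x₁) (hux₂ : G.Adj u x₂)
    (hout : ∀ v ∉ I, v ≠ u → ∃ y ∈ I, G.Adj v y ∧ y ≠ x₁ ∧ y ≠ x₂) :
    ∃ M, IsGadgetAt G M u := by
  have huI : u ∉ I := fun h => hI.not_adj (mem_coe.2 h) (mem_coe.2 hx₁) hux₁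
  set S : Finset V := {u, x₁, x₂}
  set X := I \ S
  have hXS : X ⊆ Sᶜ := fun v hv => mem_compl.2 (mem_sdiff.1 hv).2
  have hXdom : ∀ v ∉ S, v ∉ X → ∃ w ∈ X, G.Adj v w := by
    intro v hvS hvX
    obtain ⟨y, hyI, hvy, hy₁, hy₂⟩ :=
      hout v (fun h => hvX (mem_sdiff.2 ⟨h, hvS⟩)) (by rintro rfl; simp [S] at hvS)
    exact ⟨y, mem_sdiff.2 ⟨hyI, by simp [S, hy₁, hy₂, ne_of_mem_of_not_mem hyI huI]⟩, hvy⟩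
  have hnbr : ∀ v ∈ I, ∃ w, G.Adj v w ∧ w ∈ Sᶜ \ X := by
    intro v hv
    obtain ⟨w, hvw, hwu, hwI⟩ := exists_adj_ne_notMem hδ hI hv u
    refine ⟨w, hvw, mem_sdiff.2 ⟨?_, fun h => hwI (mem_sdiff.1 h).1⟩⟩
    simp [S, hwu, (ne_of_mem_of_not_mem hx₁ hwI).symm, (ne_of_mem_of_not_mem hx₂ hwI).symm]
  have hdomX : ∀ K, (∀ v ∈ S, v ∉ K → ∃ w ∈ K, G.Adj v w) → Dominating G (K ∪ X) :=
    fun K hK => dominating_union_of_dominates_compl hXdom fun v hv hvK =>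
      (hK v hv hvK).imp fun w ⟨hw, hvw⟩ => ⟨mem_union_left X hw, hvw⟩
  have hdom_sdiff : ∀ x, G.Adj u x → Dominating G ({x} ∪ (Sᶜ \ X)) := by
    refine fun x hux => dominating_union_compl_sdiff (hI.mono (by simp [X]))
      (fun v hv _ => ?_) fun v hv _ => ?_
    · obtain ⟨w, hvw, hw⟩ := hnbr v (mem_sdiff.1 hv).1
      exact ⟨w, hvw, Or.inr (mem_compl.1 (mem_sdiff.1 hw).1)⟩
    · obtain rfl | hvI : v = u ∨ v ∈ I := by
        simp only [S, mem_insert, mem_singleton] at hv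
        rcases hv with h | rfl | rfl <;> simp_all
      · exact ⟨x, by simp, hux⟩
      · obtain ⟨w, hvw, hw⟩ := hnbr v hvI
        exact ⟨w, mem_union_right _ hw, hvw⟩
  have := hux₁.ne; have := hux₂.ne
  refine ⟨_, isGadgetAt_of_split (K₁ := {x₁, x₂}) (K₃ := {u}) (by simp [S]) hXS hXS
    (by simp [S, insert_subset_iff]) (hdomX _ ?_) (hdom_sdiff x₁ hux₁) (hdomX _ ?_)
    (hdom_sdiff x₂ hux₂) (by simp [S, ← Multiset.cons_zero, *, Ne.symm])
    (by simp [← Multiset.cons_zero, *])⟩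
  all_goals simp only [S, forall_mem_insert, mem_singleton, forall_eq]
  · exact ⟨fun _ => ⟨x₁, by simp, hux₁⟩, fun h => by simp at h, fun h => by simp at h⟩
  · exact ⟨fun h => by simp at h, fun _ => ⟨u, by simp, hux₁.symm⟩,
      fun _ => ⟨u, by simp, hux₂.symm⟩⟩

/-- The four sets are `Kᵢ` completed by `X`, `Sᶜ \ X`, `Y`, `Sᶜ \ Y` for maximal independent sets
`X`, `Y` of `G - S` with `z ∈ Y`. -/
theorem exists_isGadgetAt_of_special {S K₁ K₂ K₃ K₄ : Finset V} {u z : V} (hu : u ∈ S)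
    (hz : z ∉ S) (hK : K₁ ∪ K₂ ∪ K₃ ∪ K₄ ⊆ S)
    (hK₁ : ∀ v ∈ S, v ∉ K₁ → ∃ w ∈ K₁, G.Adj v w)
    (hK₂ : ∀ v ∈ S, v ∉ K₂ → ∃ w ∈ K₂, G.Adj v w)
    (hK₂' : ∀ v ∉ S, ∃ w, G.Adj v w ∧ (w ∈ K₂ ∨ w ∉ S))
    (hK₃ : ∀ v ∈ S, v ∉ K₃ → ∃ w ∈ insert z K₃, G.Adj v w)
    (hK₄ : ∀ v ∈ S, v ∉ K₄ → ∃ w ∈ K₄, G.Adj v w)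
    (hK₄' : ∀ v ∉ S, ∃ w, G.Adj v w ∧ (w ∈ K₄ ∨ w ∉ S))
    (hload : ∀ w ∈ S, ({K₁, K₂, K₃, K₄} : Multiset (Finset V)).countP (w ∈ ·) ≤ 2)
    (hloadu : ({K₁, K₂, K₃, K₄} : Multiset (Finset V)).countP (u ∈ ·) ≤ 1) :
    ∃ M, IsGadgetAt G M u := by
  obtain ⟨X, -, hXS, hX, hXdom⟩ := exists_isIndepSet_dominates Sᶜ ∅ (empty_subset _) (by simp)
  obtain ⟨Y, hzY, hYS, hY, hYdom⟩ :=
    exists_isIndepSet_dominates Sᶜ {z} (by simpa using hz) (by simp)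
  have hsub : ∀ {K T : Finset V} {v : V}, (∃ w ∈ K, G.Adj v w) → ∃ w ∈ K ∪ T, G.Adj v w :=
    fun ⟨w, hw, hvw⟩ => ⟨w, mem_union_left _ hw, hvw⟩
  refine ⟨_, isGadgetAt_of_split hu hXS hYS hK ?_ ?_ ?_ ?_ hload hloadu⟩
  · exact dominating_union_of_dominates_compl (fun v hv => hXdom v (mem_compl.2 hv))
      fun v hv hvK => hsub (hK₁ v hv hvK)
  · exact dominating_union_compl_sdiff hX (fun v _ hvS => hK₂' v hvS)
      fun v hv hvK => hsub (hK₂ v hv hvK)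
  · refine dominating_union_of_dominates_compl (fun v hv => hYdom v (mem_compl.2 hv))
      fun v hv hvK => ?_
    obtain ⟨w, hw, hvw⟩ := hK₃ v hv hvK
    rcases mem_insert.1 hw with rfl | hw
    · exact ⟨w, mem_union_right _ (hzY (mem_singleton_self w)), hvw⟩
    · exact ⟨w, mem_union_left _ hw, hvw⟩
  · exact dominating_union_compl_sdiff hY (fun v _ hvS => hK₄' v hvS)
      fun v hv hvK => hsub (hK₄ v hv hvK)

theorem exists_isGadgetAt_of_square_of_adj_side (hδ : ∀ v, 2 ≤ (G.neighborSet v).ncard)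
    {u q x₁ x₂ z : V} (hux₁ : G.Adj u x₁) (hux₂ : G.Adj u x₂) (hqx₁ : G.Adj q x₁)
    (hqx₂ : G.Adj q x₂) (huq : u ≠ q) (hx : x₁ ≠ x₂) (hx₁₂ : ¬G.Adj x₁ x₂)
    (hNu : ∀ w, G.Adj u w → w = x₁ ∨ w = x₂) (hx₁z : G.Adj x₁ z) (hzu : z ≠ u) (hzq : z ≠ q) :
    ∃ M, IsGadgetAt G M u := by
  have hzx₂ : z ≠ x₂ := fun h => hx₁₂ (h ▸ hx₁z)
  have hnbr : ∀ v ∉ ({u, q, x₁, x₂} : Finset V), ∀ x, ∃ w, G.Adj v w ∧ w ≠ x ∧ w ≠ u :=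
    fun v hv x => by
      obtain ⟨w, hvw, hwx⟩ := exists_adj_ne hδ v x
      refine ⟨w, hvw, hwx, ?_⟩
      rintro rfl
      rcases hNu v hvw.symm with rfl | rfl <;> simp at hv
  have := hux₁.ne; have := hux₂.ne; have := hqx₁.ne; have := hqx₂.ne
  refine exists_isGadgetAt_of_special (S := {u, q, x₁, x₂}) (K₁ := {x₁, u}) (K₂ := {x₁, q})
    (K₃ := {x₂}) (K₄ := {x₂, q}) (z := z) (by simp) (by simp [*, hx₁z.ne'])
    (by simp [insert_subset_iff]) ?_ ?_ (fun v hv => ?_) ?_ ?_ (fun v hv => ?_)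
    (by simp [← Multiset.cons_zero, *, Ne.symm]) (by simp [← Multiset.cons_zero, *])
  all_goals try simp only [forall_mem_insert, mem_singleton, forall_eq]
  · exact ⟨fun h => by simp at h, fun _ => ⟨x₁, by simp, hqx₁⟩, fun h => by simp at h,
      fun _ => ⟨u, by simp, hux₂.symm⟩⟩
  · exact ⟨fun _ => ⟨x₁, by simp, hux₁⟩, fun h => by simp at h, fun h => by simp at h,
      fun _ => ⟨q, by simp, hqx₂.symm⟩⟩
  · obtain ⟨w, hvw, hwx₂, hwu⟩ := hnbr v hv x₂
    refine ⟨w, hvw, ?_⟩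
    simp only [mem_insert, mem_singleton]
    tauto
  · exact ⟨fun _ => ⟨x₂, by simp, hux₂⟩, fun _ => ⟨x₂, by simp, hqx₂⟩,
      fun _ => ⟨z, by simp, hx₁z⟩, fun h => by simp at h⟩
  · exact ⟨fun _ => ⟨x₂, by simp, hux₂⟩, fun h => by simp at h,
      fun _ => ⟨q, by simp, hqx₁.symm⟩, fun h => by simp at h⟩
  · obtain ⟨w, hvw, hwx₁, hwu⟩ := hnbr v hv x₁
    refine ⟨w, hvw, ?_⟩
    simp only [mem_insert, mem_singleton]
    tauto

theorem exists_isGadgetAt_of_square_of_adj_opposite (hδ : ∀ v, 2 ≤ (G.neighborSet v).ncard)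
    {u q x₁ x₂ r : V} (hux₁ : G.Adj u x₁) (hux₂ : G.Adj u x₂) (hqx₁ : G.Adj q x₁)
    (hqx₂ : G.Adj q x₂) (huq : u ≠ q) (hnuq : ¬G.Adj u q) (hx : x₁ ≠ x₂)
    (hNu : ∀ w, G.Adj u w → w = x₁ ∨ w = x₂) (hNx₁ : ∀ w, G.Adj x₁ w → w = u ∨ w = q)
    (hNx₂ : ∀ w, G.Adj x₂ w → w = u ∨ w = q) (hqr : G.Adj q r) (hrx₁ : r ≠ x₁) (hrx₂ : r ≠ x₂) :
    ∃ M, IsGadgetAt G M u := by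
  have hru : r ≠ u := by rintro rfl; exact hnuq hqr.symm
  have hnbr : ∀ v ∉ ({u, q, x₁, x₂} : Finset V),
      ∃ w, G.Adj v w ∧ w ∉ ({u, q, x₁, x₂} : Finset V) := fun v hv => by
    obtain ⟨w, hvw, hwq⟩ := exists_adj_ne hδ v q
    refine ⟨w, hvw, ?_⟩
    simp only [mem_insert, mem_singleton, hwq, false_or, not_or]
    refine ⟨?_, ?_, ?_⟩ <;> rintro rfl
    · rcases hNu v hvw.symm with rfl | rfl <;> simp at hv
    · rcases hNx₁ v hvw.symm with rfl | rfl <;> simp at hv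
    · rcases hNx₂ v hvw.symm with rfl | rfl <;> simp at hv
  have := hux₁.ne; have := hux₂.ne; have := hqx₁.ne; have := hqx₂.ne
  refine exists_isGadgetAt_of_special (S := {u, q, x₁, x₂}) (K₁ := {x₁, q}) (K₂ := {x₂, q})
    (K₃ := {u}) (K₄ := {x₁, x₂}) (z := r) (by simp) (by simp [*, hqr.ne'])
    (by simp [insert_subset_iff]) ?_ ?_ (fun v hv => (hnbr v hv).imp fun _ h => ⟨h.1, .inr h.2⟩)
    ?_ ?_ (fun v hv => (hnbr v hv).imp fun _ h => ⟨h.1, .inr h.2⟩)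
    (by simp [← Multiset.cons_zero, *, Ne.symm]) (by simp [← Multiset.cons_zero, *])
  all_goals simp only [forall_mem_insert, mem_singleton, forall_eq]
  · exact ⟨fun _ => ⟨x₁, by simp, hux₁⟩, fun h => by simp at h, fun h => by simp at h,
      fun _ => ⟨q, by simp, hqx₂.symm⟩⟩
  · exact ⟨fun _ => ⟨x₂, by simp, hux₂⟩, fun h => by simp at h,
      fun _ => ⟨q, by simp, hqx₁.symm⟩, fun h => by simp at h⟩
  · exact ⟨fun h => by simp at h, fun _ => ⟨r, by simp, hqr⟩, fun _ => ⟨u, by simp, hux₁.symm⟩,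
      fun _ => ⟨u, by simp, hux₂.symm⟩⟩
  · exact ⟨fun _ => ⟨x₁, by simp, hux₁⟩, fun _ => ⟨x₁, by simp, hqx₁⟩, fun h => by simp at h,
      fun h => by simp at h⟩

theorem exists_isGadgetAt_of_square (hδ : ∀ v, 2 ≤ (G.neighborSet v).ncard)
    (hC4 : ∀ c : G.ConnectedComponent, ¬ Nonempty (G.induce c.supp ≃g cycleGraph 4))
    {u q x₁ x₂ : V} (hux₁ : G.Adj u x₁) (hux₂ : G.Adj u x₂) (hqx₁ : G.Adj q x₁)
    (hqx₂ : G.Adj q x₂) (huq : u ≠ q) (hnuq : ¬G.Adj u q) (hx : x₁ ≠ x₂) (hx₁₂ : ¬G.Adj x₁ x₂)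
    (hNu : ∀ w, G.Adj u w → w = x₁ ∨ w = x₂) : ∃ M, IsGadgetAt G M u := by
  by_cases hz₁ : ∃ z, G.Adj x₁ z ∧ z ≠ u ∧ z ≠ q
  · obtain ⟨z, hx₁z, hzu, hzq⟩ := hz₁
    exact exists_isGadgetAt_of_square_of_adj_side hδ hux₁ hux₂ hqx₁ hqx₂ huq hx hx₁₂ hNu
      hx₁z hzu hzq
  by_cases hz₂ : ∃ z, G.Adj x₂ z ∧ z ≠ u ∧ z ≠ q
  · obtain ⟨z, hx₂z, hzu, hzq⟩ := hz₂
    exact exists_isGadgetAt_of_square_of_adj_side hδ hux₂ hux₁ hqx₂ hqx₁ huq hx.symm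
      (fun h => hx₁₂ h.symm) (fun w hw => (hNu w hw).symm) hx₂z hzu hzq
  push Not at hz₁ hz₂
  have hNx₁ : ∀ w, G.Adj x₁ w → w = u ∨ w = q := fun w hw => by tauto
  have hNx₂ : ∀ w, G.Adj x₂ w → w = u ∨ w = q := fun w hw => by tauto
  by_cases hr : ∃ r, G.Adj q r ∧ r ≠ x₁ ∧ r ≠ x₂
  · obtain ⟨r, hqr, hrx₁, hrx₂⟩ := hr
    exact exists_isGadgetAt_of_square_of_adj_opposite hδ hux₁ hux₂ hqx₁ hqx₂ huq hnuq hx hNu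
      hNx₁ hNx₂ hqr hrx₁ hrx₂
  push Not at hr
  exact absurd (nonempty_iso_cycleGraph_four hux₁ hux₂ hqx₁ hqx₂ huq hnuq hx hx₁₂ hNu
    (fun w hw => by tauto) hNx₁ hNx₂) (hC4 _)

/-- Swapping `v` into `I \ T` and extending gives a maximal independent set that contains `w`,
hence avoids `u`, hence contains `x`. -/
theorem not_adj_of_forall_mem_of_notMem {u : V}
    (hN : ∀ J : Finset V, G.IsIndepSet (J : Set V) → Dominating G J → u ∉ J →
      ∀ w, G.Adj u w → w ∈ J)
    {I T : Finset V} (hI : G.IsIndepSet (I : Set V)) {v w x : V}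
    (hv : ∀ y ∈ I, G.Adj v y → y ∈ T) (hwI : w ∈ I) (hwT : w ∉ T) (huw : G.Adj u w)
    (hux : G.Adj u x) : ¬G.Adj v x := by
  have hJ₀ : G.IsIndepSet (insert v (I \ T) : Finset V) := by
    rw [coe_insert, SimpleGraph.IsIndepSet, Set.pairwise_insert]
    refine ⟨hI.mono (by simp), fun y hy _ => ?_⟩
    have hy' := mem_sdiff.1 (mem_coe.1 hy)
    exact ⟨fun h => hy'.2 (hv y hy'.1 h), fun h => hy'.2 (hv y hy'.1 h.symm)⟩
  obtain ⟨J, hJ₀J, hJ, hJD⟩ := exists_isIndepSet_dominating _ hJ₀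
  have hwJ : w ∈ J := hJ₀J (mem_insert_of_mem (mem_sdiff.2 ⟨hwI, hwT⟩))
  have huJ : u ∉ J := fun h => hJ.not_adj (mem_coe.2 h) (mem_coe.2 hwJ) huw
  exact hJ.not_adj (mem_coe.2 (hJ₀J (mem_insert_self v _))) (mem_coe.2 (hN J hJ hJD huJ x hux))

theorem adj_of_forall_adj_mem {u : V}
    (hN : ∀ J : Finset V, G.IsIndepSet (J : Set V) → Dominating G J → u ∉ J →
      ∀ w, G.Adj u w → w ∈ J)
    {I : Finset V} (hI : G.IsIndepSet (I : Set V)) (hID : Dominating G I) {q x₁ x₂ : V}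
    (hx₂ : x₂ ∈ I) (hx : x₁ ≠ x₂) (hux₁ : G.Adj u x₁) (hux₂ : G.Adj u x₂) (hqI : q ∉ I)
    (hq : ∀ y ∈ I, G.Adj q y → y = x₁ ∨ y = x₂) : G.Adj q x₂ := by
  by_contra hqx₂
  have hqx₁ : ¬G.Adj q x₁ := not_adj_of_forall_mem_of_notMem hN hI (T := {x₁})
    (fun y hy hqy => by rcases hq y hy hqy with rfl | rfl <;> simp_all) hx₂
    (by simpa using hx.symm) hux₂ hux₁
  obtain ⟨y, hy, hqy⟩ := hID q hqI
  rcases hq y hy hqy with rfl | rfl <;> contradiction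

theorem exists_isGadgetAt_of_forall_adj_mem (hδ : ∀ v, 2 ≤ (G.neighborSet v).ncard)
    (hC4 : ∀ c : G.ConnectedComponent, ¬ Nonempty (G.induce c.supp ≃g cycleGraph 4)) {u : V}
    (hN : ∀ J : Finset V, G.IsIndepSet (J : Set V) → Dominating G J → u ∉ J →
      ∀ w, G.Adj u w → w ∈ J) : ∃ M, IsGadgetAt G M u := by
  obtain ⟨x₁, hux₁, -⟩ := exists_adj_ne hδ u u
  obtain ⟨I, hx₁I, hI, hID⟩ := exists_isIndepSet_dominating {x₁} (by simp)
  have hx₁ : x₁ ∈ I := hx₁I (mem_singleton_self x₁)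
  have huI : u ∉ I := fun h => hI.not_adj (mem_coe.2 h) (mem_coe.2 hx₁) hux₁
  have hNI := hN I hI hID huI
  obtain ⟨x₂, hux₂, hx⟩ := exists_adj_ne hδ u x₁
  have hx₂ := hNI x₂ hux₂
  by_cases hQ : ∃ q ∉ I, q ≠ u ∧ ∀ y ∈ I, G.Adj q y → y = x₁ ∨ y = x₂
  · obtain ⟨q, hqI, hqu, hq⟩ := hQ
    have hqx₁ : G.Adj q x₁ :=
      adj_of_forall_adj_mem hN hI hID hx₁ hx hux₂ hux₁ hqI fun y hy hqy => (hq y hy hqy).symm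
    have hqx₂ : G.Adj q x₂ := adj_of_forall_adj_mem hN hI hID hx₂ hx.symm hux₁ hux₂ hqI hq
    have hNu : ∀ w, G.Adj u w → w = x₁ ∨ w = x₂ := by
      intro w huw
      by_contra! hw
      exact not_adj_of_forall_mem_of_notMem hN hI (T := {x₁, x₂})
        (fun y hy hqy => by simpa using hq y hy hqy) (hNI w huw) (by simpa using hw) huw hux₁ hqx₁
    exact exists_isGadgetAt_of_square hδ hC4 hux₁ hux₂ hqx₁ hqx₂ hqu.symm
      (fun h => hqI (hNI q h)) hx.symm (hI.not_adj (mem_coe.2 hx₁) (mem_coe.2 hx₂)) hNu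
  · push Not at hQ
    exact exists_isGadgetAt_of_forall_adj_ne hδ hI hx₁ hx₂ hx.symm hux₁ hux₂ hQ

theorem exists_isGadgetAt (hδ : ∀ v, 2 ≤ (G.neighborSet v).ncard)
    (hC4 : ∀ c : G.ConnectedComponent, ¬ Nonempty (G.induce c.supp ≃g cycleGraph 4)) (u : V) :
    ∃ M, IsGadgetAt G M u := by
  by_cases h : ∃ I : Finset V, G.IsIndepSet (I : Set V) ∧ Dominating G I ∧ u ∉ I ∧
      ∃ w, G.Adj u w ∧ w ∉ I
  · obtain ⟨I, hI, hID, huI, w, huw, hwI⟩ := h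
    exact exists_isGadgetAt_of_adj_notMem hδ hI hID huI huw hwI
  · push Not at h
    exact exists_isGadgetAt_of_forall_adj_mem hδ hC4 h

end

/-- The fractional domatic number of a finite graph is strictly greater than 2 if and
only if the minimum degree is at least 2 and no connected component is isomorphic to
the 4-cycle. -/
theorem stmt_2 {V : Type*} [Fintype V] [DecidableEq V] [Nonempty V] (G : SimpleGraph V) :
    2 < fracDomatic G ↔
      ((∀ v : V, 2 ≤ (G.neighborSet v).ncard) ∧
        ∀ c : G.ConnectedComponent, ¬ Nonempty (G.induce c.supp ≃g cycleGraph 4)) := by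
  refine ⟨fun h => ⟨fun v => ?_, fun c ⟨e⟩ => ?_⟩, fun ⟨hδ, hC4⟩ =>
    two_lt_fracDomatic (exists_isGadgetAt hδ hC4)⟩
  · by_contra! hv
    exact h.not_ge (fracDomatic_le_two fun _ _ _ h𝒟 =>
      h𝒟.le_two_mul_of_ncard_neighborSet_le_one (Nat.le_of_lt_succ hv))
  · exact h.not_ge (fracDomatic_le_two fun _ _ _ h𝒟 => h𝒟.le_two_mul_of_iso_cycleGraph_four e)
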